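/- arXiv:1808.04290 — 2 statements merged into one kernel-verified Lean document; each statement's English description precedes it below -/
import Mathlib

section
/- Let (X, M, σ) be a finite measure space and 0 < c < σ(X). Then for every natural number n there exists N ∈ ℕ such that for any collection A_1, …, A_N ∈ M with σ(A_i) ≥ c for all i, there exist indices i_1 < i_2 < ⋯ < i_n such that σ(A_{i_1} ∩ A_{i_2} ∩ ⋯ ∩ A_{i_n}) > 0. -/
/-! Double counting: the counting function `x ↦ #{i | x ∈ A i}` integrates to `∑ i, σ (A i)`.
If all `(n + 1)`-fold intersections were null it would be at most `n` almost everywhere, so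
`∑ i, σ (A i) ≤ n * σ univ`; hence `N` with `n * σ univ < N * c` suffices. -/

open MeasureTheory Finset

section

open scoped Classical

variable {X ι : Type*} [Fintype ι]

lemma card_filter_mem_le_of_forall_notMem_biInter {A : ι → Set X} {n : ℕ} {x : X}
    (hx : ∀ s ∈ powersetCard (n + 1) univ, x ∉ ⋂ i ∈ s, A i) : #{i | x ∈ A i} ≤ n := by
  by_contra! h
  obtain ⟨s, hs, hcard⟩ := exists_subset_card_eq (Nat.succ_le_of_lt h)
  exact hx s (mem_powersetCard.2 ⟨subset_univ s, hcard⟩)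
    (Set.mem_iInter₂.2 fun i hi => (mem_filter.1 (hs hi)).2)

lemma lintegral_card_filter_mem [MeasurableSpace X] (σ : Measure X) {A : ι → Set X}
    (hA : ∀ i, MeasurableSet (A i)) :
    ∫⁻ x, (#{i | x ∈ A i} : ℕ) ∂σ = ∑ i, σ (A i) := by
  simp_rw [natCast_card_filter]
  rw [lintegral_finsetSum _ fun i _ => ?_]
  · exact sum_congr rfl fun i _ => by
      simpa [Set.indicator_apply] using lintegral_indicator_one (hA i)
  · exact Measurable.piecewise (hA i) measurable_const measurable_const

theorem exists_card_eq_succ_measure_biInter_pos [MeasurableSpace X] (σ : Measure X)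
    {A : ι → Set X} (hA : ∀ i, MeasurableSet (A i)) {n : ℕ} (h : n * σ Set.univ < ∑ i, σ (A i)) :
    ∃ s : Finset ι, #s = n + 1 ∧ 0 < σ (⋂ i ∈ s, A i) := by
  by_contra! hnull
  have hae : ∀ᵐ x ∂σ, ∀ s ∈ powersetCard (n + 1) univ, x ∉ ⋂ i ∈ s, A i :=
    (Filter.eventually_all_finset _).2 fun s hs =>
      measure_eq_zero_iff_ae_notMem.1 <| nonpos_iff_eq_zero.1 <| hnull s (mem_powersetCard.1 hs).2
  refine h.not_ge ?_
  calc ∑ i, σ (A i) = ∫⁻ x, (#{i | x ∈ A i} : ℕ) ∂σ := (lintegral_card_filter_mem σ hA).symm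
    _ ≤ ∫⁻ _, (n : ℕ) ∂σ := lintegral_mono_ae <| hae.mono fun x hx => by
      exact_mod_cast card_filter_mem_le_of_forall_notMem_biInter hx
    _ = n * σ Set.univ := lintegral_const _

end

theorem stmt0_general {X : Type*} [MeasurableSpace X] (σ : Measure X) [IsFiniteMeasure σ]
    (c : ENNReal) (hc0 : 0 < c) (n : ℕ) :
    ∃ N : ℕ, ∀ A : Fin N → Set X, (∀ i, MeasurableSet (A i)) → (∀ i, c ≤ σ (A i)) →
      ∃ s : Finset (Fin N), s.card = n ∧ 0 < σ (⋂ i ∈ s, A i) := by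
  obtain ⟨N, hN⟩ := ENNReal.exists_nat_mul_gt hc0.ne'
    (ENNReal.mul_ne_top (ENNReal.natCast_ne_top n) (measure_ne_top σ Set.univ))
  refine ⟨N, fun A hA hAc => ?_⟩
  obtain ⟨s, hs, hpos⟩ := exists_card_eq_succ_measure_biInter_pos σ hA <| hN.trans_le <| by
    simpa using sum_le_sum fun i (_ : i ∈ univ) => hAc i
  obtain ⟨t, hts, ht⟩ := exists_subset_card_eq (hs ▸ n.le_succ : n ≤ #s)
  exact ⟨t, ht, hpos.trans_le (measure_mono (Set.biInter_subset_biInter_left hts))⟩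

theorem stmt0 {X : Type*} [MeasurableSpace X] (σ : Measure X) [IsFiniteMeasure σ]
    (c : ENNReal) (hc0 : 0 < c) (hc : c < σ Set.univ) (n : ℕ) :
    ∃ N : ℕ, ∀ A : Fin N → Set X, (∀ i, MeasurableSet (A i)) → (∀ i, c ≤ σ (A i)) →
      ∃ s : Finset (Fin N), s.card = n ∧ 0 < σ (⋂ i ∈ s, A i) :=
  stmt0_general σ c hc0 n
end

section
/- Let (X, M, σ) be a probability space and 0 < c < 1. Then there exists P ∈ ℕ such that for any N > P and any sets A_1, …, A_N ∈ M with σ(A_i) ≥ c for all i, there exist distinct indices i ≠ j ≤ N with σ(A_i ∩ A_j) ≥ c³/3. -/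
/-!
Bonferroni's inequality bounds `∑ σ (A i)` by `σ (⋃ A i)` plus the sum of the pairwise
intersections. If `k` sets of measure `≥ c` pairwise meet in measure `< c³/3`, this gives
`k c ≤ 1 + (k choose 2) c³/3`, which fails for `k = ⌈2/c⌉₊`: then `k c ≥ 2`, while
`(k choose 2) c³/3 < (2 + c) c / 3 < 1`.
-/

open MeasureTheory ENNReal

section Bonferroni

variable {X ι : Type*} [MeasurableSpace X] (μ : Measure X) {A : ι → Set X}

theorem sum_measure_le_measure_biUnion_add_choose_two_mul (hA : ∀ i, MeasurableSet (A i))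
    {ε : ℝ≥0∞} (hε : ∀ i j, i ≠ j → μ (A i ∩ A j) ≤ ε) (s : Finset ι) :
    ∑ i ∈ s, μ (A i) ≤ μ (⋃ i ∈ s, A i) + s.card.choose 2 * ε := by
  classical
  induction s using Finset.induction with
  | empty => simp
  | @insert a s ha ih =>
    have h_inter : μ (A a ∩ ⋃ i ∈ s, A i) ≤ s.card * ε := by
      rw [Set.inter_iUnion₂]
      calc μ (⋃ i ∈ s, A a ∩ A i) ≤ ∑ i ∈ s, μ (A a ∩ A i) := measure_biUnion_finset_le s _
        _ ≤ ∑ _i ∈ s, ε :=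
          Finset.sum_le_sum fun i hi ↦ hε a i (ne_of_mem_of_not_mem hi ha).symm
        _ = s.card * ε := by rw [Finset.sum_const, nsmul_eq_mul]
    have h_choose : ((s.card + 1).choose 2 : ℝ≥0∞) = s.card + s.card.choose 2 := by
      rw [Nat.choose_succ_succ, Nat.choose_one_right]; push_cast; rfl
    rw [Finset.sum_insert ha, Finset.card_insert_of_notMem ha, Finset.set_biUnion_insert,
      h_choose]
    calc μ (A a) + ∑ i ∈ s, μ (A i)
        ≤ μ (A a) + (μ (⋃ i ∈ s, A i) + s.card.choose 2 * ε) := by gcongr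
      _ = μ (A a ∪ ⋃ i ∈ s, A i) + μ (A a ∩ ⋃ i ∈ s, A i) + s.card.choose 2 * ε := by
          rw [← add_assoc, measure_union_add_inter' (hA a)]
      _ ≤ μ (A a ∪ ⋃ i ∈ s, A i) + (s.card + s.card.choose 2) * ε := by
          rw [add_mul, ← add_assoc]; gcongr

theorem card_mul_le_one_add_choose_two_mul [IsProbabilityMeasure μ]
    (hA : ∀ i, MeasurableSet (A i)) {a ε : ℝ≥0∞} (ha : ∀ i, a ≤ μ (A i))
    (hε : ∀ i j, i ≠ j → μ (A i ∩ A j) ≤ ε) (s : Finset ι) :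
    s.card * a ≤ 1 + s.card.choose 2 * ε :=
  calc s.card * a = ∑ _i ∈ s, a := by rw [Finset.sum_const, nsmul_eq_mul]
    _ ≤ ∑ i ∈ s, μ (A i) := Finset.sum_le_sum fun i _ ↦ ha i
    _ ≤ μ (⋃ i ∈ s, A i) + s.card.choose 2 * ε :=
      sum_measure_le_measure_biUnion_add_choose_two_mul μ hA hε s
    _ ≤ 1 + s.card.choose 2 * ε := by gcongr; exact prob_le_one

end Bonferroni

theorem one_add_choose_two_mul_lt_ceil_mul {c : ℝ} (hc0 : 0 < c) (hc1 : c < 1) :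
    1 + (⌈2 / c⌉₊.choose 2 : ℝ) * (c ^ 3 / 3) < ⌈2 / c⌉₊ * c := by
  set k := ⌈2 / c⌉₊
  have hk_ge : 2 ≤ k * c := (div_le_iff₀ hc0).1 (Nat.le_ceil _)
  have hk_lt : (k - 1) * c < 2 := by
    have := Nat.ceil_lt_add_one (div_pos two_pos hc0).le
    rw [← lt_div_iff₀ hc0]; linarith
  have hk_one : (1 : ℝ) ≤ k := by exact_mod_cast Nat.one_le_ceil_iff.2 (div_pos two_pos hc0)
  rw [Nat.cast_choose_two]
  nlinarith [mul_le_mul_of_nonneg_left hk_lt.le (mul_nonneg (sub_nonneg.2 hk_one) hc0.le)]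

theorem stmt1 {X : Type*} [MeasurableSpace X] (σ : Measure X) [IsProbabilityMeasure σ]
    (c : ℝ) (hc0 : 0 < c) (hc1 : c < 1) :
    ∃ P : ℕ, ∀ N : ℕ, N > P → ∀ A : Fin N → Set X,
      (∀ i, MeasurableSet (A i)) → (∀ i, ENNReal.ofReal c ≤ σ (A i)) →
      ∃ i j : Fin N, i ≠ j ∧ ENNReal.ofReal (c ^ 3 / 3) ≤ σ (A i ∩ A j) := by
  refine ⟨⌈2 / c⌉₊, fun N hN A hA hAc ↦ ?_⟩
  by_contra! h_small
  obtain ⟨s, -, hs⟩ : ∃ s ⊆ (Finset.univ : Finset (Fin N)), s.card = ⌈2 / c⌉₊ :=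
    Finset.exists_subset_card_eq (by simpa using hN.le)
  have h := card_mul_le_one_add_choose_two_mul σ hA hAc (fun i j hij ↦ (h_small i j hij).le) s
  rw [hs] at h
  have h_real : (⌈2 / c⌉₊ * c : ℝ) ≤ 1 + (⌈2 / c⌉₊.choose 2 : ℝ) * (c ^ 3 / 3) := by
    rwa [← ofReal_natCast, ← ofReal_natCast, ← ofReal_mul (Nat.cast_nonneg _),
      ← ofReal_mul (Nat.cast_nonneg _), ← ofReal_one, ← ofReal_add zero_le_one (by positivity),
      ofReal_le_ofReal_iff (by positivity)] at h
  exact (one_add_choose_two_mul_lt_ceil_mul hc0 hc1).not_ge h_real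
end
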